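/- Let V_n : Xⁿ ⇝ Y_n be a channel sequence, p̄_n optimal input distributions, and φ_n = −log₂ inf of the nonzero channel probabilities of V_n. For 0 ≤ δ_n ≤ 1 define the perturbed distribution p̂_n(x) = (1 − δ_n) p̄_n(x) + δ_n / |X|ⁿ. Then I(V_n, p̂_n) ≥ (1 − δ_n) I(V_n) − δ_n φ_n; in particular I(V_n) − I(V_n, p̂_n) ∈ O(δ_n (n + φ_n)). -/

import Mathlib

/-!
Every nonzero transition probability is at least `2^{-φ}`, so each row of the channel has finite
support and all sums are finite. Let `J(p, q) = crossMI W p q` be the mutual-information sum of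
`p` with the output law `q•W` in the denominator. Then `J(p, q) - I(W, p) = D(p•W ‖ q•W) ≥ 0`, and
`J` is affine in `p`, so for `q = (1 - δ) p + δ u`

  `I(W, q) = (1 - δ) J(p, q) + δ J(u, q) ≥ (1 - δ) I(W, p) + δ J(u, q)`.

Since `q•W ≤ 1`, every term of `J(u, q)` has `log₂ (W / q•W) ≥ log₂ W ≥ -φ`, so `J(u, q) ≥ -φ`.
Taking for `q` the uniform law instead gives `I(W, p) ≤ J(p, q) ≤ log₂ |A|`, which together with
the optimality of `p̄` yields the `O(δ (n + φ))` bound.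
-/

open Filter Asymptotics

/-- Output distribution `p•W`. -/
noncomputable def outDist {X Y : Type*} (W : X → Y → ℝ) (p : X → ℝ) (y : Y) : ℝ :=
  ∑' x, p x * W x y

/-- Mutual information density `i(W,p,x,y)`. -/
noncomputable def iDen {X Y : Type*} (W : X → Y → ℝ) (p : X → ℝ) (x : X) (y : Y) : ℝ :=
  if W x y = 0 ∨ outDist W p y = 0 then 0
  else Real.logb 2 (W x y / outDist W p y)

/-- Mutual information `I(W,p)`. -/
noncomputable def MI {X Y : Type*} (W : X → Y → ℝ) (p : X → ℝ) : ℝ :=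
  ∑' xy : X × Y, p xy.1 * W xy.1 xy.2 * iDen W p xy.1 xy.2

lemma sub_le_mul_log_div {a b : ℝ} (ha : 0 ≤ a) (hb : 0 ≤ b) (hab : b = 0 → a = 0) :
    a - b ≤ a * Real.log (a / b) := by
  rcases ha.eq_or_lt with rfl | ha
  · simpa using hb
  have hb : 0 < b := hb.lt_of_ne' fun h => ha.ne' (hab h)
  calc a - b = a * (1 - (a / b)⁻¹) := by field_simp
    _ ≤ a * Real.log (a / b) :=
      mul_le_mul_of_nonneg_left (Real.one_sub_inv_le_log_of_pos (div_pos ha hb)) ha.le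

lemma neg_le_logb_of_two_rpow_neg_le {a φ : ℝ} (h : (2 : ℝ) ^ (-φ) ≤ a) : -φ ≤ Real.logb 2 a :=
  calc -φ = Real.logb 2 ((2 : ℝ) ^ (-φ)) := (Real.logb_rpow two_pos (by norm_num)).symm
    _ ≤ Real.logb 2 a := Real.logb_le_logb_of_le one_lt_two (by positivity) h

lemma isBigO_of_le_mul_add {l : Filter ℕ} {f δ φ : ℕ → ℝ} {L : ℝ} (hf0 : ∀ n, 0 ≤ f n)
    (hδ : ∀ n, 0 ≤ δ n) (hφ : ∀ n, 0 ≤ φ n) (hf : ∀ n, f n ≤ δ n * (n * L + φ n)) :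
    f =O[l] fun n => δ n * ((n : ℝ) + φ n) := by
  refine IsBigO.of_bound (max L 1) (.of_forall fun n => ?_)
  rw [Real.norm_of_nonneg (hf0 n),
    Real.norm_of_nonneg (mul_nonneg (hδ n) (add_nonneg n.cast_nonneg (hφ n)))]
  have hnL := mul_le_mul_of_nonneg_left (le_max_left L 1) n.cast_nonneg
  have hφL := le_mul_of_one_le_left (hφ n) (le_max_right L 1)
  calc f n ≤ δ n * (n * L + φ n) := hf n
    _ ≤ δ n * (max L 1 * (n + φ n)) := mul_le_mul_of_nonneg_left (by linarith) (hδ n)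
    _ = max L 1 * (δ n * (n + φ n)) := by ring

lemma nonempty_of_mem_stdSimplex {A : Type*} [Fintype A] {p : A → ℝ}
    (hp : p ∈ stdSimplex ℝ A) : Nonempty A := by
  by_contra h
  rw [not_nonempty_iff] at h
  simp [stdSimplex_of_isEmpty_index] at hp

lemma uniform_mem_stdSimplex (A : Type*) [Fintype A] [Nonempty A] :
    (fun _ => (Fintype.card A : ℝ)⁻¹) ∈ stdSimplex ℝ A :=
  ⟨fun _ => by positivity, by simp⟩

lemma mix_mem_stdSimplex {A : Type*} [Fintype A] {p u q : A → ℝ} {δ : ℝ}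
    (hp : p ∈ stdSimplex ℝ A) (hu : u ∈ stdSimplex ℝ A) (hδ : δ ∈ Set.Icc (0 : ℝ) 1)
    (hq : ∀ x, q x = (1 - δ) * p x + δ * u x) : q ∈ stdSimplex ℝ A := by
  obtain rfl : q = (1 - δ) • p + δ • u := funext hq
  exact convex_stdSimplex ℝ A hp hu (sub_nonneg.2 hδ.2) hδ.1 (by ring)

section Channel

variable {A B : Type*} {W : A → B → ℝ} {T : Finset B} {p q u : A → ℝ}

structure IsChannelOn (W : A → B → ℝ) (T : Finset B) : Prop where
  nonneg : ∀ x y, 0 ≤ W x y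
  eq_zero_of_notMem : ∀ x y, y ∉ T → W x y = 0
  sum_eq_one : ∀ x, ∑ y ∈ T, W x y = 1

lemma exists_isChannelOn [Finite A] (hW0 : ∀ x y, 0 ≤ W x y)
    (hW1 : ∀ x, HasSum (W x) 1) {ε : ℝ} (hε : 0 < ε) (hεW : ∀ x y, W x y ≠ 0 → ε ≤ W x y) :
    ∃ T, IsChannelOn W T := by
  have hfin : ∀ x, {y | W x y ≠ 0}.Finite := fun x =>
    (eventually_cofinite.mp ((hW1 x).summable.tendsto_cofinite_zero.eventually_lt_const hε)).subset
      fun y hy => not_lt.mpr (hεW x y hy)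
  have hT : ∀ x y, y ∉ (Set.finite_iUnion hfin).toFinset → W x y = 0 := fun x y hy => by
    by_contra h
    exact hy ((Set.finite_iUnion hfin).mem_toFinset.mpr (Set.mem_iUnion.mpr ⟨x, h⟩))
  exact ⟨_, hW0, hT, fun x => (hasSum_sum_of_ne_finset_zero (hT x)).unique (hW1 x)⟩

noncomputable def crossMI (W : A → B → ℝ) (p q : A → ℝ) : ℝ :=
  ∑' xy : A × B, p xy.1 * W xy.1 xy.2 * iDen W q xy.1 xy.2

lemma logb_le_iDen {x : A} {y : B} (hW : 0 < W x y)
    (hW1 : W x y ≤ 1) (hQ0 : 0 ≤ outDist W q y) (hQ1 : outDist W q y ≤ 1) :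
    Real.logb 2 (W x y) ≤ iDen W q x y := by
  rw [iDen]
  split_ifs with h
  · exact Real.logb_nonpos one_lt_two hW.le hW1
  · exact Real.logb_le_logb_of_le one_lt_two hW
      (le_div_self hW.le (hQ0.lt_of_ne' (not_or.mp h).2) hQ1)

lemma IsChannelOn.le_one (hW : IsChannelOn W T) (x : A) (y : B) : W x y ≤ 1 := by
  by_cases hy : y ∈ T
  · exact hW.sum_eq_one x ▸ Finset.single_le_sum (fun y _ => hW.nonneg x y) hy
  · exact (hW.eq_zero_of_notMem x y hy).trans_le zero_le_one

lemma IsChannelOn.nonneg_of_two_rpow_neg_le [Nonempty A] (hW : IsChannelOn W T) {φ : ℝ}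
    (hφ : ∀ x y, W x y ≠ 0 → (2 : ℝ) ^ (-φ) ≤ W x y) : 0 ≤ φ := by
  obtain ⟨x⟩ := ‹Nonempty A›
  obtain ⟨y, -, hy⟩ := Finset.exists_ne_zero_of_sum_ne_zero (hW.sum_eq_one x ▸ one_ne_zero)
  have := (neg_le_logb_of_two_rpow_neg_le (hφ x y hy)).trans
    (Real.logb_nonpos one_lt_two (hW.nonneg x y) (hW.le_one x y))
  linarith

variable [Fintype A]

lemma outDist_eq_sum (W : A → B → ℝ) (p : A → ℝ) (y : B) :
    outDist W p y = ∑ x, p x * W x y :=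
  tsum_fintype _

lemma outDist_nonneg (hW0 : ∀ x y, 0 ≤ W x y) (hp : ∀ x, 0 ≤ p x) (y : B) :
    0 ≤ outDist W p y := by
  rw [outDist_eq_sum]
  exact Finset.sum_nonneg fun x _ => mul_nonneg (hp x) (hW0 x y)

lemma mul_le_outDist (hW0 : ∀ x y, 0 ≤ W x y) (hp : ∀ x, 0 ≤ p x) (x : A) (y : B) :
    p x * W x y ≤ outDist W p y := by
  rw [outDist_eq_sum]
  exact Finset.single_le_sum (f := fun x => p x * W x y)
    (fun x _ => mul_nonneg (hp x) (hW0 x y)) (Finset.mem_univ x)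

lemma mul_outDist_le (hW0 : ∀ x y, 0 ≤ W x y) {c : ℝ} (hpq : ∀ x, c * p x ≤ q x) (y : B) :
    c * outDist W p y ≤ outDist W q y := by
  simp only [outDist_eq_sum, Finset.mul_sum, ← mul_assoc]
  exact Finset.sum_le_sum fun x _ => mul_le_mul_of_nonneg_right (hpq x) (hW0 x y)

lemma iDen_le_logb_inv (hW0 : ∀ x y, 0 ≤ W x y) (hq : ∀ x, 0 ≤ q x) {x : A} (hqx : 0 < q x)
    (hqx1 : q x ≤ 1) (y : B) : iDen W q x y ≤ Real.logb 2 (q x)⁻¹ := by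
  rw [iDen]
  split_ifs with h
  · exact Real.logb_nonneg one_lt_two ((one_le_inv₀ hqx).mpr hqx1)
  · obtain ⟨hW, hQ⟩ := not_or.mp h
    replace hQ := (outDist_nonneg hW0 hq y).lt_of_ne' hQ
    refine Real.logb_le_logb_of_le one_lt_two (div_pos ((hW0 x y).lt_of_ne' hW) hQ) ?_
    rw [div_le_iff₀ hQ, le_inv_mul_iff₀ hqx]
    exact mul_le_outDist hW0 hq x y

namespace IsChannelOn

lemma outDist_le_one (hW : IsChannelOn W T) (hq : q ∈ stdSimplex ℝ A) (y : B) :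
    outDist W q y ≤ 1 := by
  rw [outDist_eq_sum, ← hq.2]
  exact Finset.sum_le_sum fun x _ => mul_le_of_le_one_right (hq.1 x) (hW.le_one x y)

lemma sum_outDist (hW : IsChannelOn W T) (p : A → ℝ) :
    ∑ y ∈ T, outDist W p y = ∑ x, p x := by
  simp only [outDist_eq_sum]
  rw [Finset.sum_comm]
  exact Finset.sum_congr rfl fun x _ => by rw [← Finset.mul_sum, hW.sum_eq_one, mul_one]

lemma sum_sum_mul_const (hW : IsChannelOn W T) (p : A → ℝ) (c : ℝ) :
    ∑ x, ∑ y ∈ T, p x * W x y * c = (∑ x, p x) * c := by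
  simp only [← Finset.sum_mul, ← Finset.mul_sum, hW.sum_eq_one, mul_one]

lemma crossMI_eq_sum (hW : IsChannelOn W T) (p q : A → ℝ) :
    crossMI W p q = ∑ x, ∑ y ∈ T, p x * W x y * iDen W q x y := by
  rw [crossMI, tsum_eq_sum (s := Finset.univ ×ˢ T) fun xy hxy => ?_, Finset.sum_product]
  rw [hW.eq_zero_of_notMem _ _ (by simpa using hxy), mul_zero, zero_mul]

lemma crossMI_mix (hW : IsChannelOn W T) {a b : ℝ} (hq : ∀ x, q x = a * p x + b * u x)
    (r : A → ℝ) : crossMI W q r = a * crossMI W p r + b * crossMI W u r := by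
  simp only [hW.crossMI_eq_sum, Finset.mul_sum, ← Finset.sum_add_distrib, hq]
  refine Finset.sum_congr rfl fun x _ => Finset.sum_congr rfl fun y _ => ?_
  ring

lemma neg_le_crossMI (hW : IsChannelOn W T) {φ : ℝ}
    (hφ : ∀ x y, W x y ≠ 0 → (2 : ℝ) ^ (-φ) ≤ W x y)
    (hu : u ∈ stdSimplex ℝ A) (hq : q ∈ stdSimplex ℝ A) : -φ ≤ crossMI W u q := by
  have hterm : ∀ x y, u x * W x y * -φ ≤ u x * W x y * iDen W q x y := fun x y => by
    rcases (hW.nonneg x y).eq_or_lt with h | h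
    · simp [← h]
    refine mul_le_mul_of_nonneg_left ?_ (mul_nonneg (hu.1 x) h.le)
    exact (neg_le_logb_of_two_rpow_neg_le (hφ x y h.ne')).trans (logb_le_iDen h
      (hW.le_one x y) (outDist_nonneg hW.nonneg hq.1 y) (hW.outDist_le_one hq y))
  calc -φ = ∑ x, ∑ y ∈ T, u x * W x y * -φ := by rw [hW.sum_sum_mul_const, hu.2, one_mul]
    _ ≤ crossMI W u q := by
      rw [hW.crossMI_eq_sum]
      exact Finset.sum_le_sum fun x _ => Finset.sum_le_sum fun y _ => hterm x y

lemma sum_mul_iDen_sub (hW : IsChannelOn W T) (hp : ∀ x, 0 ≤ p x) {y : B}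
    (hpq : outDist W q y = 0 → outDist W p y = 0) :
    ∑ x, (p x * W x y * iDen W q x y - p x * W x y * iDen W p x y) =
      outDist W p y * Real.logb 2 (outDist W p y / outDist W q y) := by
  nth_rewrite 1 [outDist_eq_sum W p y]
  rw [Finset.sum_mul]
  refine Finset.sum_congr rfl fun x _ => ?_
  by_cases hpW : p x * W x y = 0
  · simp [hpW]
  have hW0 : W x y ≠ 0 := right_ne_zero_of_mul hpW
  have hQp : outDist W p y ≠ 0 :=
    ((mul_nonneg (hp x) (hW.nonneg x y)).lt_of_ne' hpW |>.trans_le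
      (mul_le_outDist hW.nonneg hp x y)).ne'
  have hQq : outDist W q y ≠ 0 := mt hpq hQp
  rw [iDen, iDen, if_neg (by tauto), if_neg (by tauto), Real.logb_div hW0 hQq,
    Real.logb_div hW0 hQp, Real.logb_div hQp hQq]
  ring

lemma MI_le_crossMI (hW : IsChannelOn W T) (hp : p ∈ stdSimplex ℝ A) (hq : q ∈ stdSimplex ℝ A)
    {c : ℝ} (hc : 0 < c) (hpq : ∀ x, c * p x ≤ q x) : MI W p ≤ crossMI W p q := by
  have hac : ∀ y, outDist W q y = 0 → outDist W p y = 0 := fun y h =>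
    le_antisymm (nonpos_of_mul_nonpos_right (h ▸ mul_outDist_le hW.nonneg hpq y) hc)
      (outDist_nonneg hW.nonneg hp.1 y)
  have hgibbs : ∀ y ∈ T, (outDist W p y - outDist W q y) / Real.log 2 ≤
      outDist W p y * Real.logb 2 (outDist W p y / outDist W q y) := fun y _ => by
    rw [Real.logb, ← mul_div_assoc]
    exact div_le_div_of_nonneg_right (sub_le_mul_log_div (outDist_nonneg hW.nonneg hp.1 y)
      (outDist_nonneg hW.nonneg hq.1 y) (hac y)) (Real.log_pos one_lt_two).le
  have hsum : ∑ y ∈ T, (outDist W p y - outDist W q y) / Real.log 2 = 0 := by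
    rw [← Finset.sum_div, Finset.sum_sub_distrib, hW.sum_outDist, hW.sum_outDist, hp.2, hq.2,
      sub_self, zero_div]
  show crossMI W p p ≤ crossMI W p q
  rw [hW.crossMI_eq_sum, hW.crossMI_eq_sum, ← sub_nonneg, ← Finset.sum_sub_distrib]
  simp only [← Finset.sum_sub_distrib]
  rw [Finset.sum_comm, Finset.sum_congr rfl fun y _ => hW.sum_mul_iDen_sub hp.1 (hac y),
    ← hsum]
  exact Finset.sum_le_sum hgibbs

lemma MI_le_logb_card [Nonempty A] (hW : IsChannelOn W T) (hp : p ∈ stdSimplex ℝ A) :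
    MI W p ≤ Real.logb 2 (Fintype.card A) := by
  have hc : (0 : ℝ) < (Fintype.card A : ℝ)⁻¹ := by positivity
  have hc1 : (Fintype.card A : ℝ)⁻¹ ≤ 1 :=
    inv_le_one_of_one_le₀ (by exact_mod_cast Fintype.card_pos)
  have hbound : ∀ x y, iDen W (fun _ => (Fintype.card A : ℝ)⁻¹) x y ≤
      Real.logb 2 (Fintype.card A) := fun x y => by
    simpa using iDen_le_logb_inv hW.nonneg (fun _ => hc.le) hc hc1 y
  calc MI W p ≤ crossMI W p (fun _ => (Fintype.card A : ℝ)⁻¹) :=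
        hW.MI_le_crossMI hp (uniform_mem_stdSimplex A) hc
          fun x => mul_le_of_le_one_right hc.le (mem_Icc_of_mem_stdSimplex hp x).2
    _ ≤ ∑ x, ∑ y ∈ T, p x * W x y * Real.logb 2 (Fintype.card A) := by
        rw [hW.crossMI_eq_sum]
        exact Finset.sum_le_sum fun x _ => Finset.sum_le_sum fun y _ =>
          mul_le_mul_of_nonneg_left (hbound x y) (mul_nonneg (hp.1 x) (hW.nonneg x y))
    _ = Real.logb 2 (Fintype.card A) := by rw [hW.sum_sum_mul_const, hp.2, one_mul]

theorem MI_mix_ge (hW : IsChannelOn W T) {φ : ℝ}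
    (hφ : ∀ x y, W x y ≠ 0 → (2 : ℝ) ^ (-φ) ≤ W x y)
    (hp : p ∈ stdSimplex ℝ A) (hu : u ∈ stdSimplex ℝ A) {δ : ℝ} (hδ : δ ∈ Set.Icc (0 : ℝ) 1)
    (hq : ∀ x, q x = (1 - δ) * p x + δ * u x) :
    (1 - δ) * MI W p - δ * φ ≤ MI W q := by
  have hqs := mix_mem_stdSimplex hp hu hδ hq
  have hfirst : (1 - δ) * MI W p ≤ (1 - δ) * crossMI W p q := by
    rcases hδ.2.eq_or_lt with rfl | hδ1
    · simp
    refine mul_le_mul_of_nonneg_left (hW.MI_le_crossMI hp hqs (sub_pos.2 hδ1) fun x => ?_)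
      (sub_nonneg.2 hδ.2)
    rw [hq]
    linarith [mul_nonneg hδ.1 (hu.1 x)]
  have hsecond := mul_le_mul_of_nonneg_left (hW.neg_le_crossMI hφ hu hqs) hδ.1
  have hsplit : MI W q = (1 - δ) * crossMI W p q + δ * crossMI W u q := hW.crossMI_mix hq q
  linarith

theorem MI_sub_MI_mix_le [Nonempty A] (hW : IsChannelOn W T) {φ : ℝ}
    (hφ : ∀ x y, W x y ≠ 0 → (2 : ℝ) ^ (-φ) ≤ W x y)
    (hp : p ∈ stdSimplex ℝ A) (hu : u ∈ stdSimplex ℝ A) {δ : ℝ} (hδ : δ ∈ Set.Icc (0 : ℝ) 1)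
    (hq : ∀ x, q x = (1 - δ) * p x + δ * u x) :
    MI W p - MI W q ≤ δ * (Real.logb 2 (Fintype.card A) + φ) := by
  have := hW.MI_mix_ge hφ hp hu hδ hq
  have := mul_le_mul_of_nonneg_left (hW.MI_le_logb_card hp) hδ.1
  linarith

end IsChannelOn

end Channel

theorem MI_perturbed_optimal_distribution_general
    {X : Type*} [Fintype X] {Y : ℕ → Type*}
    (V : ∀ n, (Fin n → X) → Y n → ℝ)
    (hV0 : ∀ n x y, 0 ≤ V n x y) (hV1 : ∀ n x, HasSum (V n x) 1)
    (pbar : ∀ n, (Fin n → X) → ℝ)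
    (hpbar0 : ∀ n x, 0 ≤ pbar n x) (hpbar1 : ∀ n, ∑ x, pbar n x = 1)
    (hopt : ∀ n (q : (Fin n → X) → ℝ), (∀ x, 0 ≤ q x) → (∑ x, q x = 1) →
      MI (V n) q ≤ MI (V n) (pbar n))
    (φ : ℕ → ℝ)
    (hφ : ∀ n x y, V n x y ≠ 0 → (2 : ℝ) ^ (-(φ n)) ≤ V n x y)
    (δ : ℕ → ℝ) (hδ : ∀ n, δ n ∈ Set.Icc (0 : ℝ) 1)
    (phat : ∀ n, (Fin n → X) → ℝ)
    (hphat : ∀ n x, phat n x = (1 - δ n) * pbar n x + δ n / (Fintype.card X : ℝ) ^ n) :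
    (∀ n, (1 - δ n) * MI (V n) (pbar n) - δ n * φ n ≤ MI (V n) (phat n)) ∧
    (fun n => MI (V n) (pbar n) - MI (V n) (phat n)) =O[atTop]
      (fun n => δ n * ((n : ℝ) + φ n)) := by
  have hpbar n : pbar n ∈ stdSimplex ℝ (Fin n → X) := ⟨hpbar0 n, hpbar1 n⟩
  have hne n : Nonempty (Fin n → X) := nonempty_of_mem_stdSimplex (hpbar n)
  have hunif n := uniform_mem_stdSimplex (Fin n → X)
  have hcard n : (Fintype.card (Fin n → X) : ℝ) = (Fintype.card X : ℝ) ^ n := by simp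
  have hmix n x : phat n x =
      (1 - δ n) * pbar n x + δ n * (Fintype.card (Fin n → X) : ℝ)⁻¹ := by
    rw [hphat, hcard, div_eq_mul_inv]
  have hphat_mem n := mix_mem_stdSimplex (hpbar n) (hunif n) (hδ n) (hmix n)
  choose T hW using fun n => exists_isChannelOn (hV0 n) (hV1 n) (by positivity) (hφ n)
  refine ⟨fun n => (hW n).MI_mix_ge (hφ n) (hpbar n) (hunif n) (hδ n) (hmix n), ?_⟩
  refine isBigO_of_le_mul_add (L := Real.logb 2 (Fintype.card X))
    (fun n => sub_nonneg.2 (hopt n _ (hphat_mem n).1 (hphat_mem n).2)) (fun n => (hδ n).1)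
    (fun n => (hW n).nonneg_of_two_rpow_neg_le (hφ n)) fun n => ?_
  have hloss := (hW n).MI_sub_MI_mix_le (hφ n) (hpbar n) (hunif n) (hδ n) (hmix n)
  rwa [hcard, Real.logb_pow] at hloss

/-- Perturbation of an optimal input distribution: mixing the optimal distribution `p̄_n`
with the uniform distribution with weight `δ_n` costs at most
`I(V_n) − I(V_n, p̂_n) ≤ δ_n I(V_n) + δ_n φ_n`, where `2^{−φ_n}` lower-bounds the nonzero
channel probabilities; in particular the loss is `O(δ_n (n + φ_n))`. -/
theorem MI_perturbed_optimal_distribution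
    {X : Type*} [Fintype X] {Y : ℕ → Type*} [∀ n, Countable (Y n)]
    (V : ∀ n, (Fin n → X) → Y n → ℝ)
    (hV0 : ∀ n x y, 0 ≤ V n x y) (hV1 : ∀ n x, HasSum (V n x) 1)
    (pbar : ∀ n, (Fin n → X) → ℝ)
    (hpbar0 : ∀ n x, 0 ≤ pbar n x) (hpbar1 : ∀ n, ∑ x, pbar n x = 1)
    (hopt : ∀ n (q : (Fin n → X) → ℝ), (∀ x, 0 ≤ q x) → (∑ x, q x = 1) →
      MI (V n) q ≤ MI (V n) (pbar n))
    (φ : ℕ → ℝ) (hφ0 : ∀ n, 0 ≤ φ n)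
    (hφ : ∀ n x y, V n x y ≠ 0 → (2 : ℝ) ^ (-(φ n)) ≤ V n x y)
    (δ : ℕ → ℝ) (hδ : ∀ n, δ n ∈ Set.Icc (0 : ℝ) 1)
    (phat : ∀ n, (Fin n → X) → ℝ)
    (hphat : ∀ n x, phat n x = (1 - δ n) * pbar n x + δ n / (Fintype.card X : ℝ) ^ n) :
    (∀ n, (1 - δ n) * MI (V n) (pbar n) - δ n * φ n ≤ MI (V n) (phat n)) ∧
    (fun n => MI (V n) (pbar n) - MI (V n) (phat n)) =O[atTop]
      (fun n => δ n * ((n : ℝ) + φ n)) :=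
  MI_perturbed_optimal_distribution_general V hV0 hV1 pbar hpbar0 hpbar1 hopt φ hφ δ hδ phat hphat
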